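/- arXiv:2404.12789 — 4 statements merged into one kernel-verified Lean document; each statement's English description precedes it below -/
import Mathlib

section
/- For all nonnegative integers k and m, the function f : ℝ → ℝ defined by f(x) = e^x · q_{k,m}(x) − p_{k,m}(x) has vanishing derivatives at the origin up to order k+m; that is, the j-th iterated derivative of f at 0 equals 0 for every j ≤ k+m. -/
open Finset

/-- Numerator of the `(k,m)` Padé approximant to the exponential. -/
noncomputable def padeP (k m : ℕ) (x : ℝ) : ℝ :=
  ∑ j ∈ Finset.range (k + 1),
    ((Nat.factorial (k + m - j) * Nat.factorial k : ℝ) /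
      (Nat.factorial (k + m) * Nat.factorial (k - j) * Nat.factorial j)) * x ^ j

/-- Denominator of the `(k,m)` Padé approximant to the exponential. -/
noncomputable def padeQ (k m : ℕ) (x : ℝ) : ℝ :=
  ∑ j ∈ Finset.range (m + 1),
    ((Nat.factorial (k + m - j) * Nat.factorial m : ℝ) /
      (Nat.factorial (k + m) * Nat.factorial (m - j) * Nat.factorial j)) * (-x) ^ j

/-- Pointwise derivative of `padeQ`. -/
noncomputable def padeQD (k m : ℕ) (x : ℝ) : ℝ :=
  ∑ j ∈ Finset.range (m + 1),
    ((Nat.factorial (k + m - j) * Nat.factorial m : ℝ) /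
      (Nat.factorial (k + m) * Nat.factorial (m - j) * Nat.factorial j)) *
      ((j : ℝ) * (-x) ^ (j - 1) * (-1))

/-- Pointwise derivative of `padeP`. -/
noncomputable def padePD (k m : ℕ) (x : ℝ) : ℝ :=
  ∑ j ∈ Finset.range (k + 1),
    ((Nat.factorial (k + m - j) * Nat.factorial k : ℝ) /
      (Nat.factorial (k + m) * Nat.factorial (k - j) * Nat.factorial j)) *
      ((j : ℝ) * x ^ (j - 1))

lemma fact_ne (n : ℕ) : ((n.factorial : ℝ)) ≠ 0 :=
  Nat.cast_ne_zero.mpr n.factorial_ne_zero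

lemma fcast (n : ℕ) : (((n + 1).factorial : ℕ) : ℝ) = ((n : ℝ) + 1) * (n.factorial : ℝ) := by
  rw [Nat.factorial_succ]; push_cast; ring

lemma hasDerivAt_padeQ (k m : ℕ) (x : ℝ) :
    HasDerivAt (fun y => padeQ k m y) (padeQD k m x) x := by
  unfold padeQ padeQD
  apply HasDerivAt.fun_sum
  intro j _
  have h1 : HasDerivAt (fun y : ℝ => (-y) ^ j) ((j : ℝ) * (-x) ^ (j - 1) * (-1)) x := by
    have h := (hasDerivAt_pow j (-x)).comp x (hasDerivAt_neg (x := x))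
    exact h
  exact h1.const_mul _

lemma hasDerivAt_padeP (k m : ℕ) (x : ℝ) :
    HasDerivAt (fun y => padeP k m y) (padePD k m x) x := by
  unfold padeP padePD
  apply HasDerivAt.fun_sum
  intro j _
  exact (hasDerivAt_pow j x).const_mul _

lemma hasDerivAt_F (k m : ℕ) (x : ℝ) :
    HasDerivAt (fun y => Real.exp y * padeQ k m y - padeP k m y)
      (Real.exp x * padeQ k m x + Real.exp x * padeQD k m x - padePD k m x) x :=
  ((Real.hasDerivAt_exp x).mul (hasDerivAt_padeQ k m x)).sub (hasDerivAt_padeP k m x)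

lemma L1 (k m : ℕ) (x : ℝ) :
    padeQ (k + 1) m x + padeQD (k + 1) m x
      = ((k : ℝ) + 1) / ((k : ℝ) + (m : ℝ) + 1) * padeQ k m x := by
  unfold padeQ padeQD
  conv_lhs => rw [Finset.sum_range_succ]
  conv_lhs => rw [Finset.sum_range_succ']
  conv_rhs => rw [Finset.mul_sum, Finset.sum_range_succ]
  simp only [Nat.cast_zero, zero_mul, mul_zero, add_zero, Nat.add_sub_cancel, Nat.cast_add,
    Nat.cast_one]
  rw [add_right_comm, ← Finset.sum_add_distrib]
  congr 1
  · apply Finset.sum_congr rfl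
    intro j hj
    rw [Finset.mem_range] at hj
    obtain ⟨t, rfl⟩ : ∃ t, m = j + t + 1 := ⟨m - j - 1, by omega⟩
    rw [show k + 1 + (j + t + 1) - j = k + t + 2 from by omega,
      show k + 1 + (j + t + 1) - (j + 1) = k + t + 1 from by omega,
      show j + t + 1 - j = t + 1 from by omega,
      show j + t + 1 - (j + 1) = t from by omega,
      show k + (j + t + 1) - j = k + t + 1 from by omega,
      show k + 1 + (j + t + 1) = (k + j + t + 1) + 1 from by omega,
      show k + (j + t + 1) = k + j + t + 1 from by omega,
      show k + t + 2 = (k + t + 1) + 1 from by omega,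
      show (t + 1 : ℕ) = t + 1 from rfl,
      fcast (k + j + t + 1), fcast (k + t + 1), fcast t, fcast j]
    have F1 := fact_ne (k + t + 1)
    have F2 := fact_ne (k + j + t + 1)
    have F3 := fact_ne t
    have F4 := fact_ne j
    have F5 := fact_ne (j + t + 1)
    have G1 : ((k : ℝ) + (j : ℝ) + (t : ℝ) + 1 + 1) ≠ 0 := by positivity
    have G2 : ((t : ℝ) + 1) ≠ 0 := by positivity
    have G3 : ((j : ℝ) + 1) ≠ 0 := by positivity
    have G4 : ((k : ℝ) + ((j : ℝ) + (t : ℝ) + 1) + 1) ≠ 0 := by positivity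
    push_cast
    field_simp
    ring
  · rw [show m - m = 0 from by omega, Nat.factorial_zero,
      show k + 1 + m = (k + m) + 1 from by omega,
      fcast (k + m), fcast k]
    have F1 := fact_ne k
    have F2 := fact_ne (k + m)
    have F3 := fact_ne m
    have G1 : ((k : ℝ) + (m : ℝ) + 1) ≠ 0 := by positivity
    push_cast
    field_simp

lemma L2 (k m : ℕ) (x : ℝ) :
    padePD (k + 1) m x = ((k : ℝ) + 1) / ((k : ℝ) + (m : ℝ) + 1) * padeP k m x := by
  unfold padePD padeP
  conv_lhs => rw [Finset.sum_range_succ']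
  conv_rhs => rw [Finset.mul_sum]
  simp only [Nat.cast_zero, zero_mul, mul_zero, add_zero, Nat.add_sub_cancel, Nat.cast_add,
    Nat.cast_one]
  apply Finset.sum_congr rfl
  intro j hj
  rw [Finset.mem_range] at hj
  obtain ⟨s, rfl⟩ : ∃ s, k = j + s := ⟨k - j, by omega⟩
  rw [show j + s + 1 + m - (j + 1) = s + m from by omega,
    show j + s + 1 - (j + 1) = s from by omega,
    show j + s + m - j = s + m from by omega,
    show j + s - j = s from by omega,
    show j + s + 1 + m = (j + s + m) + 1 from by omega,
    show j + s + 1 = (j + s) + 1 from by omega,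
    fcast (j + s + m), fcast (j + s), fcast j]
  have F1 := fact_ne (s + m)
  have F2 := fact_ne (j + s)
  have F3 := fact_ne (j + s + m)
  have F4 := fact_ne s
  have F5 := fact_ne j
  have G1 : ((j : ℝ) + (s : ℝ) + (m : ℝ) + 1) ≠ 0 := by positivity
  have G2 : ((j : ℝ) + 1) ≠ 0 := by positivity
  have G3 : ((j : ℝ) + (s : ℝ) + ((m : ℝ)) + 1) ≠ 0 := by positivity
  push_cast
  field_simp

lemma L3 (m : ℕ) (x : ℝ) :
    padeQ 0 m x + padeQD 0 m x = (-x) ^ m / (m.factorial : ℝ) := by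
  unfold padeQ padeQD
  conv_lhs => rw [Finset.sum_range_succ]
  conv_lhs => rw [Finset.sum_range_succ']
  simp only [Nat.cast_zero, zero_mul, mul_zero, add_zero, Nat.add_sub_cancel, Nat.zero_add,
    Nat.cast_add, Nat.cast_one]
  rw [add_right_comm, ← Finset.sum_add_distrib]
  have hs : ∀ j ∈ Finset.range m,
      ((Nat.factorial (m - j) * Nat.factorial m : ℝ) /
          (Nat.factorial m * Nat.factorial (m - j) * Nat.factorial j)) * (-x) ^ j +
        ((Nat.factorial (m - (j + 1)) * Nat.factorial m : ℝ) /
            (Nat.factorial m * Nat.factorial (m - (j + 1)) * Nat.factorial (j + 1))) *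
          (((j : ℝ) + 1) * (-x) ^ j * (-1)) = 0 := by
    intro j hj
    rw [Finset.mem_range] at hj
    obtain ⟨t, rfl⟩ : ∃ t, m = j + t + 1 := ⟨m - j - 1, by omega⟩
    rw [show j + t + 1 - j = t + 1 from by omega,
      show j + t + 1 - (j + 1) = t from by omega,
      fcast t, fcast j]
    have F1 := fact_ne t
    have F2 := fact_ne j
    have F3 := fact_ne (j + t + 1)
    have G2 : ((t : ℝ) + 1) ≠ 0 := by positivity
    have G3 : ((j : ℝ) + 1) ≠ 0 := by positivity
    field_simp
    ring
  rw [Finset.sum_congr rfl hs, Finset.sum_const, smul_zero, zero_add,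
    show m - m = 0 from by omega, Nat.factorial_zero]
  have F3 := fact_ne m
  push_cast
  field_simp

lemma L4 (m : ℕ) (x : ℝ) : padePD 0 m x = 0 := by
  unfold padePD
  simp

lemma padeQ_zero (k m : ℕ) : padeQ k m 0 = 1 := by
  unfold padeQ
  rw [Finset.sum_eq_single 0]
  · rw [show k + m - 0 = k + m from by omega, show m - 0 = m from by omega, Nat.factorial_zero]
    have F1 := fact_ne (k + m)
    have F2 := fact_ne m
    simp only [neg_zero, pow_zero, mul_one, Nat.cast_one]
    field_simp
  · intro j _ hj
    simp [zero_pow hj]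
  · intro h
    exact absurd (Finset.mem_range.mpr (Nat.succ_pos m)) h

lemma padeP_zero (k m : ℕ) : padeP k m 0 = 1 := by
  unfold padeP
  rw [Finset.sum_eq_single 0]
  · rw [show k + m - 0 = k + m from by omega, show k - 0 = k from by omega, Nat.factorial_zero]
    have F1 := fact_ne (k + m)
    have F2 := fact_ne k
    simp only [pow_zero, mul_one, Nat.cast_one]
    field_simp
  · intro j _ hj
    simp [zero_pow hj]
  · intro h
    exact absurd (Finset.mem_range.mpr (Nat.succ_pos k)) h

lemma contDiff_padeQ (k m : ℕ) : ContDiff ℝ (⊤ : ℕ∞) (fun x => padeQ k m x) := by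
  unfold padeQ
  exact ContDiff.sum fun j _ => contDiff_const.mul ((contDiff_id.neg).pow j)

lemma contDiff_padeP (k m : ℕ) : ContDiff ℝ (⊤ : ℕ∞) (fun x => padeP k m x) := by
  unfold padeP
  exact ContDiff.sum fun j _ => contDiff_const.mul (contDiff_id.pow j)

lemma contDiff_F (k m : ℕ) :
    ContDiff ℝ (⊤ : ℕ∞) (fun x => Real.exp x * padeQ k m x - padeP k m x) :=
  (Real.contDiff_exp.mul (contDiff_padeQ k m)).sub (contDiff_padeP k m)

lemma iteratedDeriv_add' {n : ℕ} {f g : ℝ → ℝ} (hf : ContDiff ℝ (⊤ : ℕ∞) f) (hg : ContDiff ℝ (⊤ : ℕ∞) g)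
    (x : ℝ) :
    iteratedDeriv n (fun y => f y + g y) x = iteratedDeriv n f x + iteratedDeriv n g x := by
  rw [← iteratedDerivWithin_univ, ← iteratedDerivWithin_univ, ← iteratedDerivWithin_univ]
  exact iteratedDerivWithin_add (Set.mem_univ x) uniqueDiffOn_univ
    ((hf.of_le (mod_cast le_top)).contDiffWithinAt) ((hg.of_le (mod_cast le_top)).contDiffWithinAt)

lemma iteratedDeriv_cmul {n : ℕ} {f : ℝ → ℝ} (hf : ContDiff ℝ (⊤ : ℕ∞) f) (c : ℝ) (x : ℝ) :
    iteratedDeriv n (fun y => c * f y) x = c * iteratedDeriv n f x := by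
  rw [← iteratedDerivWithin_univ, ← iteratedDerivWithin_univ]
  exact iteratedDerivWithin_const_mul (Set.mem_univ x) uniqueDiffOn_univ c
    ((hf.of_le (mod_cast le_top)).contDiffWithinAt)

lemma expg (i : ℕ) : ∀ m : ℕ, i < m →
    iteratedDeriv i (fun x : ℝ => Real.exp x * x ^ m) 0 = 0 := by
  induction i with
  | zero =>
    intro m hm
    simp [zero_pow (by omega : m ≠ 0)]
  | succ i ih =>
    intro m hm
    obtain ⟨m, rfl⟩ : ∃ m', m = m' + 1 := ⟨m - 1, by omega⟩
    rw [iteratedDeriv_succ']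
    have hd : deriv (fun x : ℝ => Real.exp x * x ^ (m + 1)) =
        fun x => Real.exp x * x ^ (m + 1) + ((m : ℝ) + 1) * (Real.exp x * x ^ m) := by
      funext x
      rw [(show HasDerivAt (fun x : ℝ => Real.exp x * x ^ (m + 1)) _ x from
        (Real.hasDerivAt_exp x).mul (hasDerivAt_pow (m + 1) x)).deriv]
      simp only [Nat.add_sub_cancel]
      push_cast
      ring
    rw [hd]
    have h1 : ContDiff ℝ (⊤ : ℕ∞) (fun x : ℝ => Real.exp x * x ^ (m + 1)) :=
      Real.contDiff_exp.mul (contDiff_id.pow _)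
    have h2 : ContDiff ℝ (⊤ : ℕ∞) (fun x : ℝ => Real.exp x * x ^ m) :=
      Real.contDiff_exp.mul (contDiff_id.pow _)
    rw [iteratedDeriv_add' h1 (contDiff_const.mul h2) 0, iteratedDeriv_cmul h2 _ 0,
      ih (m + 1) (by omega), ih m (by omega)]
    ring

lemma deriv_F_succ (k m : ℕ) :
    deriv (fun x => Real.exp x * padeQ (k + 1) m x - padeP (k + 1) m x) =
      fun x => ((k : ℝ) + 1) / ((k : ℝ) + (m : ℝ) + 1) *
        (Real.exp x * padeQ k m x - padeP k m x) := by
  funext x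
  rw [(hasDerivAt_F (k + 1) m x).deriv]
  linear_combination Real.exp x * L1 k m x - L2 k m x

lemma deriv_F_zero (m : ℕ) :
    deriv (fun x => Real.exp x * padeQ 0 m x - padeP 0 m x) =
      fun x => (-1 : ℝ) ^ m / (m.factorial : ℝ) * (Real.exp x * x ^ m) := by
  funext x
  rw [(hasDerivAt_F 0 m x).deriv]
  have h3 := L3 m x
  have h4 := L4 m x
  rw [show ((-x) ^ m : ℝ) = (-1) ^ m * x ^ m from by rw [← neg_one_mul x, mul_pow]] at h3
  linear_combination Real.exp x * h3 - h4

theorem pade_derivs_vanish (k m : ℕ) (j : ℕ) (hj : j ≤ k + m) :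
    iteratedDeriv j (fun x : ℝ => Real.exp x * padeQ k m x - padeP k m x) 0 = 0 := by
  induction k generalizing j with
  | zero =>
    cases j with
    | zero =>
      rw [iteratedDeriv_zero]
      simp [padeQ_zero, padeP_zero]
    | succ i =>
      rw [iteratedDeriv_succ', deriv_F_zero m,
        iteratedDeriv_cmul (f := fun x => Real.exp x * x ^ m) (Real.contDiff_exp.mul (contDiff_id.pow m)) _ 0,
        expg i m (by omega)]
      ring
  | succ k ih =>
    cases j with
    | zero =>
      rw [iteratedDeriv_zero]
      simp [padeQ_zero, padeP_zero]
    | succ i =>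
      rw [iteratedDeriv_succ', deriv_F_succ k m,
        iteratedDeriv_cmul (contDiff_F k m) _ 0, ih i (by omega)]
      ring
end

section
/- Let 𝒜 be a complex Banach algebra with ‖1‖ = 1, let n ≥ 0 and let (c_k)_{k∈ℕ} be complex numbers with c_k = 0 for all k ≤ n, defining h(x) = Σ_{k} c_k x^k and its majorant h̃(t) = Σ_{k} |c_k| t^k. Let A ∈ 𝒜, let s be a nonnegative integer, let θ > 0 and tol ≥ 0 be real numbers such that Σ_k |c_k| θ^k converges, ‖2^{−s}·A‖ ≤ θ, and h̃(θ)/θ ≤ tol. Then ‖2^s · h(2^{−s}·A)‖ ≤ tol · ‖A‖; that is, the backward error ΔA = 2^s·h_{n+1}(2^{−s}A) of the scaled-and-squared approximation satisfies ‖ΔA‖/‖A‖ ≤ tol whenever A ≠ 0. -/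
/-! Once `c 0 = 0`, every term of `h(x) = ∑ₖ cₖ xᵏ` has a factor `x`, and for `‖x‖ ≤ θ`
submultiplicativity gives `‖cₖ xᵏ‖ ≤ |cₖ| θᵏ · ‖x‖ / θ`; summing, `‖h(x)‖ ≤ (h̃(θ)/θ) ‖x‖`.
This bound is homogeneous of degree one in `x`, so the factor `2ˢ` in `2ˢ h(2⁻ˢ A)` is absorbed
exactly and leaves `‖A‖`. -/

section PowerSeriesBound

variable {𝕜 𝒜 : Type*} [NormedField 𝕜] [NormedRing 𝒜] [NormedAlgebra 𝕜 𝒜]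

theorem norm_pow_le_pow_div_mul_norm {x : 𝒜} {θ : ℝ} (hθ : 0 < θ) (hx : ‖x‖ ≤ θ)
    {k : ℕ} (hk : k ≠ 0) : ‖x ^ k‖ ≤ θ ^ k / θ * ‖x‖ := by
  obtain ⟨m, rfl⟩ := Nat.exists_eq_succ_of_ne_zero hk
  calc ‖x ^ (m + 1)‖ ≤ ‖x‖ ^ m * ‖x‖ := pow_succ ‖x‖ m ▸ norm_pow_le' x m.succ_pos
    _ ≤ θ ^ m * ‖x‖ := by gcongr
    _ = θ ^ (m + 1) / θ * ‖x‖ := by rw [pow_succ, mul_div_cancel_right₀ _ hθ.ne']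

theorem norm_smul_pow_le_of_zero {c : ℕ → 𝕜} (hc : c 0 = 0) {x : 𝒜} {θ : ℝ} (hθ : 0 < θ)
    (hx : ‖x‖ ≤ θ) (k : ℕ) : ‖c k • x ^ k‖ ≤ ‖c k‖ * θ ^ k / θ * ‖x‖ := by
  rcases eq_or_ne k 0 with rfl | hk
  · simp [hc]
  · rw [norm_smul, mul_div_assoc, mul_assoc]
    gcongr
    exact norm_pow_le_pow_div_mul_norm hθ hx hk

theorem norm_tsum_smul_pow_le {c : ℕ → 𝕜} (hc : c 0 = 0) {x : 𝒜} {θ : ℝ} (hθ : 0 < θ)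
    (hx : ‖x‖ ≤ θ) (hsum : Summable fun k => ‖c k‖ * θ ^ k) :
    ‖∑' k, c k • x ^ k‖ ≤ (∑' k, ‖c k‖ * θ ^ k) / θ * ‖x‖ := by
  rw [← tsum_div_const, ← tsum_mul_right]
  exact tsum_of_norm_bounded ((hsum.div_const θ).mul_right ‖x‖).hasSum
    (norm_smul_pow_le_of_zero hc hθ hx)

end PowerSeriesBound

theorem backward_error_bound_general (𝒜 : Type*) [NormedRing 𝒜] [NormedAlgebra ℂ 𝒜]
    (n : ℕ) (c : ℕ → ℂ)
    (hc : ∀ k ≤ n, c k = 0) (A : 𝒜) (s : ℕ) (θ tol : ℝ)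
    (hθ : 0 < θ)
    (hsum : Summable fun k => ‖c k‖ * θ ^ k)
    (hA : ‖((2 : ℂ) ^ s)⁻¹ • A‖ ≤ θ)
    (hbound : (∑' k, ‖c k‖ * θ ^ k) / θ ≤ tol) :
    ‖((2 : ℂ) ^ s) • ∑' k, c k • (((2 : ℂ) ^ s)⁻¹ • A) ^ k‖ ≤ tol * ‖A‖ := by
  have h_pow_ne : (2 : ℂ) ^ s ≠ 0 := pow_ne_zero s two_ne_zero
  have h_series := norm_tsum_smul_pow_le (hc 0 n.zero_le) hθ hA hsum
  calc ‖((2 : ℂ) ^ s) • ∑' k, c k • (((2 : ℂ) ^ s)⁻¹ • A) ^ k‖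
      ≤ ‖(2 : ℂ) ^ s‖ * (tol * ‖((2 : ℂ) ^ s)⁻¹ • A‖) := by
        rw [norm_smul]
        gcongr
        exact h_series.trans (by gcongr)
    _ = tol * ‖A‖ := by
        rw [mul_left_comm, ← norm_smul, smul_inv_smul₀ h_pow_ne]

/-- Backward-error bound for scaling and squaring: if `h(x) = ∑ₖ cₖ xᵏ` with `cₖ = 0`
for `k ≤ n`, `‖2⁻ˢ A‖ ≤ θ` and `h̃(θ)/θ ≤ tol`, then the backward error
`ΔA = 2ˢ h(2⁻ˢ A)` satisfies `‖ΔA‖ ≤ tol ‖A‖`. -/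
theorem backward_error_bound (𝒜 : Type*) [NormedRing 𝒜] [NormedAlgebra ℂ 𝒜]
    [CompleteSpace 𝒜] [NormOneClass 𝒜] (n : ℕ) (c : ℕ → ℂ)
    (hc : ∀ k ≤ n, c k = 0) (A : 𝒜) (s : ℕ) (θ tol : ℝ)
    (hθ : 0 < θ) (htol : 0 ≤ tol)
    (hsum : Summable fun k => ‖c k‖ * θ ^ k)
    (hA : ‖((2 : ℂ) ^ s)⁻¹ • A‖ ≤ θ)
    (hbound : (∑' k, ‖c k‖ * θ ^ k) / θ ≤ tol) :
    ‖((2 : ℂ) ^ s) • ∑' k, c k • (((2 : ℂ) ^ s)⁻¹ • A) ^ k‖ ≤ tol * ‖A‖ :=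
  backward_error_bound_general 𝒜 n c hc A s θ tol hθ hsum hA hbound
end

section
/- Let A and J be N×N complex matrices such that Aᴴ·J + J·A = 0, and let p be a polynomial with real coefficients that is odd, i.e. p(−x) = −p(x) for all x. Then p(A) also belongs to the quadratic Lie algebra of J: (p(A))ᴴ·J + J·p(A) = 0. -/
/-!
Since `p` has real coefficients, `p(A)ᴴ = p(Aᴴ)`. The hypothesis says `Aᴴ J = J (-A)`, so `J`
intertwines `-A` with `Aᴴ` and hence `p(-A)` with `p(Aᴴ)`: `p(A)ᴴ J = J p(-A)`. Finally an odd
real polynomial satisfies `p.comp (-X) = -p`, so `p(-A) = -p(A)`.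
-/

open Matrix Polynomial

namespace Polynomial

variable {R A : Type*}

theorem star_aeval [CommSemiring R] [StarRing R] [TrivialStar R] [Semiring A] [StarRing A]
    [Algebra R A] [StarModule R A] (a : A) (p : R[X]) :
    star (aeval a p) = aeval (star a) p := by
  simp only [aeval_eq_sum_range, star_sum, star_smul, star_pow, star_trivial]

theorem _root_.SemiconjBy.aeval [CommSemiring R] [Semiring A] [Algebra R A] {j x y : A}
    (h : SemiconjBy j x y) (p : R[X]) : SemiconjBy j (aeval x p) (aeval y p) := by
  induction p using Polynomial.induction_on' with
  | add p q hp hq => simpa only [map_add] using hp.add_right hq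
  | monomial n r =>
    simpa only [aeval_monomial] using
      SemiconjBy.mul_right (Algebra.commute_algebraMap_right r j) (h.pow_right n)

theorem comp_neg_X_eq_neg_of_odd [CommRing R] [IsDomain R] [Infinite R] {p : R[X]}
    (hodd : ∀ x, p.eval (-x) = -p.eval x) : p.comp (-X) = -p :=
  Polynomial.funext fun x => by simp [hodd]

theorem aeval_neg_of_odd [CommRing R] [IsDomain R] [Infinite R] [Ring A] [Algebra R A]
    {p : R[X]} (hodd : ∀ x, p.eval (-x) = -p.eval x) (a : A) :
    aeval (-a) p = -aeval a p := by
  rw [← map_neg, ← comp_neg_X_eq_neg_of_odd hodd, aeval_comp, map_neg, aeval_X]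

end Polynomial

/-- If `A` belongs to the quadratic Lie algebra of `J` and `p` is an odd real
polynomial, then `p(A)` also belongs to the quadratic Lie algebra of `J`. -/
theorem odd_poly_mem_quadratic_lie_algebra (N : ℕ) (A J : Matrix (Fin N) (Fin N) ℂ)
    (hA : Aᴴ * J + J * A = 0) (p : Polynomial ℝ)
    (hodd : ∀ x : ℝ, p.eval (-x) = -p.eval x) :
    (Polynomial.aeval A p)ᴴ * J + J * Polynomial.aeval A p = 0 := by
  have hJ : SemiconjBy J (-A) Aᴴ := by
    rw [SemiconjBy, mul_neg, neg_eq_iff_add_eq_zero, add_comm, hA]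
  calc (aeval A p)ᴴ * J + J * aeval A p
      = aeval Aᴴ p * J + J * aeval A p := by
        rw [← star_eq_conjTranspose, star_aeval, star_eq_conjTranspose]
    _ = J * aeval (-A) p + J * aeval A p := by rw [(hJ.aeval p).eq]
    _ = 0 := by rw [aeval_neg_of_odd hodd, mul_neg, neg_add_cancel]
end

section
/- Let b_j = ((10−j)!·5!)/(10!·(5−j)!·j!) for j = 0,…,5 be the coefficients of the numerator p_{5,5} of the diagonal Padé approximant r_{5,5} of the exponential. For a square complex matrix A, set A₂ = A², A₄ = A₂², u₅ = A·(b₅·A₄ + b₃·A₂ + b₁·I) and v₅ = b₄·A₄ + b₂·A₂ + b₀·I. Then u₅ + v₅ = p_{5,5}(A) and v₅ − u₅ = p_{5,5}(−A) = q_{5,5}(A); consequently, if v₅ − u₅ is invertible then (v₅ − u₅)⁻¹·(u₅ + v₅) = (q_{5,5}(A))⁻¹·p_{5,5}(A) = r_{5,5}(A), so the order-10 approximant r_{5,5}(A) is computed with exactly three matrix products and one inversion. -/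
open Finset Matrix

/-! Splitting `p_{5,5}(x) = ∑ bⱼ xʲ` into even and odd parts gives `p_{5,5}(x) = E(x²) + x·O(x²)`,
and `p_{5,5}(-x) = E(x²) - x·O(x²)`. With `A₂ = A²` and `A₄ = A₂²` one has `v₅ = E(A₂)` and
`u₅ = A·O(A₂)`, so three products produce both numerator and denominator of `r_{5,5}(A)`. -/

/-- The coefficients of the numerator `p_{5,5}` of the diagonal Padé approximant
`r_{5,5}` of the exponential. -/
noncomputable def b55 (j : ℕ) : ℂ :=
  (Nat.factorial (10 - j) * Nat.factorial 5 : ℂ) /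
    (Nat.factorial 10 * Nat.factorial (5 - j) * Nat.factorial j)

section EvenOddSplit

variable {R S : Type*} [CommSemiring R]

theorem sum_range_two_mul_smul_pow_eq_even_add_odd [Semiring S] [Algebra R S]
    (c : ℕ → R) (x : S) (n : ℕ) :
    ∑ j ∈ range (2 * n), c j • x ^ j =
      ∑ i ∈ range n, c (2 * i) • (x * x) ^ i + x * ∑ i ∈ range n, c (2 * i + 1) • (x * x) ^ i := by
  induction n with
  | zero => simp
  | succ n ih =>
    have hodd : x ^ (2 * n + 1) = x * (x * x) ^ n := by rw [← sq, ← pow_mul, pow_succ']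
    rw [show 2 * (n + 1) = 2 * n + 1 + 1 by ring, sum_range_succ, sum_range_succ, ih,
      sum_range_succ, sum_range_succ, mul_add, mul_smul_comm, ← hodd, ← sq, ← pow_mul]
    abel

theorem sum_range_two_mul_smul_neg_pow_eq_even_sub_odd [Ring S] [Algebra R S]
    (c : ℕ → R) (x : S) (n : ℕ) :
    ∑ j ∈ range (2 * n), c j • (-x) ^ j =
      ∑ i ∈ range n, c (2 * i) • (x * x) ^ i - x * ∑ i ∈ range n, c (2 * i + 1) • (x * x) ^ i := by
  rw [sum_range_two_mul_smul_pow_eq_even_add_odd, neg_mul_neg, neg_mul, sub_eq_add_neg]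

end EvenOddSplit

/-- The three-product-one-inverse scheme for the order-10 diagonal Padé
approximant `r_{5,5}`: with `A₂ = A²`, `A₄ = A₂²`,
`u₅ = A(b₅A₄ + b₃A₂ + b₁I)` and `v₅ = b₄A₄ + b₂A₂ + b₀I` one has
`u₅ + v₅ = p_{5,5}(A)`, `v₅ − u₅ = p_{5,5}(−A) = q_{5,5}(A)`, and hence
`(v₅ − u₅)⁻¹ (u₅ + v₅) = r_{5,5}(A)` when the denominator is invertible. -/
theorem r55_three_products (N : ℕ) (A A₂ A₄ u₅ v₅ : Matrix (Fin N) (Fin N) ℂ)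
    (hA₂ : A₂ = A * A) (hA₄ : A₄ = A₂ * A₂)
    (hu : u₅ = A * (b55 5 • A₄ + b55 3 • A₂ + b55 1 • (1 : Matrix (Fin N) (Fin N) ℂ)))
    (hv : v₅ = b55 4 • A₄ + b55 2 • A₂ + b55 0 • (1 : Matrix (Fin N) (Fin N) ℂ)) :
    u₅ + v₅ = ∑ j ∈ Finset.range 6, b55 j • A ^ j ∧
    v₅ - u₅ = ∑ j ∈ Finset.range 6, b55 j • (-A) ^ j ∧
    (IsUnit (v₅ - u₅) →
      (v₅ - u₅)⁻¹ * (u₅ + v₅) =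
        (∑ j ∈ Finset.range 6, b55 j • (-A) ^ j)⁻¹ * ∑ j ∈ Finset.range 6, b55 j • A ^ j) := by
  have hv_even : v₅ = ∑ i ∈ range 3, b55 (2 * i) • A₂ ^ i := by
    simp only [hv, hA₄, sum_range_succ, sum_range_zero, pow_zero, pow_one, sq]
    abel
  have hu_odd : u₅ = A * ∑ i ∈ range 3, b55 (2 * i + 1) • A₂ ^ i := by
    simp only [hu, hA₄, sum_range_succ, sum_range_zero, pow_zero, pow_one, sq]
    abel_nf
  have hp : u₅ + v₅ = ∑ j ∈ range 6, b55 j • A ^ j := by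
    rw [show 6 = 2 * 3 from rfl, sum_range_two_mul_smul_pow_eq_even_add_odd, ← hA₂, ← hu_odd,
      ← hv_even, add_comm]
  have hq : v₅ - u₅ = ∑ j ∈ range 6, b55 j • (-A) ^ j := by
    rw [show 6 = 2 * 3 from rfl, sum_range_two_mul_smul_neg_pow_eq_even_sub_odd, ← hA₂, ← hu_odd,
      ← hv_even]
  exact ⟨hp, hq, fun _ => by rw [hp, hq]⟩
end
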